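/- For n ≥ 3, the number λ_{n,2} of n×n binary matrices with exactly two 1's in each row and each column satisfies the recursion 2·λ_{n,2} = 2(n-1)n·λ_{n-1,2} + (n-1)²n·λ_{n-2,2}, with initial values λ_{1,2} = 0 and λ_{2,2} = 1. -/

import Mathlib

def isLambda (n k : ℕ) (A : Fin n → Fin n → Bool) : Prop :=
  (∀ i : Fin n, (Finset.univ.filter fun j => A i j = true).card = k) ∧
  (∀ j : Fin n, (Finset.univ.filter fun i => A i j = true).card = k)

noncomputable def lam (n k : ℕ) : ℕ :=
  Nat.card {A : Fin n → Fin n → Bool // isLambda n k A}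

def lastIdx (n : ℕ) (h : 0 < n) : Fin n := ⟨n - 1, Nat.sub_lt h one_pos⟩

noncomputable def lamPos (n k : ℕ) (h : 0 < n) : ℕ :=
  Nat.card {A : Fin n → Fin n → Bool //
    isLambda n k A ∧ A (lastIdx n h) (lastIdx n h) = true}

noncomputable def lamNeg (n k : ℕ) (h : 0 < n) : ℕ :=
  Nat.card {A : Fin n → Fin n → Bool //
    isLambda n k A ∧ A (lastIdx n h) (lastIdx n h) = false}

/-!
Write `λ⁺_n` (`lamPos`) for the number of matrices counted by `λ_{n,2}` with a `1` in the corner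
`(n, n)`. Double counting the pairs `(A, (i, j))` with `A i j = 1`, and noting that permuting rows
and columns moves any position to the corner, gives `n λ⁺_n = 2 λ_{n,2}`.

A matrix counted by `λ⁺_{m+2}` has exactly one further `1` in its last row, say in column `j`,
and one in its last column, say in row `i`. Deleting the last row and column leaves a matrix `M`
whose row and column sums are `2`, except for row `i` and column `j`, where they are `1`
(`IsDeficient i j M`). If `M i j = 0`, flipping that entry gives a matrix counted by `λ_{m+1,2}`
with a `1` at `(i, j)`; if `M i j = 1`, row `i` and column `j` of `M` are unit vectors and
deleting them leaves a matrix counted by `λ_{m,2}`.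
Hence `λ⁺_{m+2} = 2 (m + 1) λ_{m+1,2} + (m + 1)² λ_{m,2}`.
-/

open Finset Function

instance (n k : ℕ) : DecidablePred (isLambda n k) := fun _ => by unfold isLambda; infer_instance

lemma lam_eq_card (n k : ℕ) : lam n k = #{A | isLambda n k A} := by
  rw [lam, Nat.card_eq_fintype_card, Fintype.card_subtype]

section RowCounts

variable {α β : Type*} [Fintype β]

def HasRowCounts (A : α → β → Bool) (f : α → ℕ) : Prop :=
  ∀ a, #{b | A a b = true} = f a

lemma isLambda_iff_hasRowCounts {n k : ℕ} {A : Fin n → Fin n → Bool} :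
    isLambda n k A ↔ HasRowCounts A (fun _ => k) ∧ HasRowCounts (swap A) (fun _ => k) :=
  Iff.rfl

lemma card_filter_prod_eq_sum [Fintype α] (A : α → β → Bool) :
    #{p : α × β | A p.1 p.2 = true} = ∑ a, #{b | A a b = true} := by
  simp only [card_filter, Fintype.sum_prod_type]

lemma exists_eq_decide_of_card_filter_eq_one [DecidableEq β] {v : β → Bool}
    (hcard : #{c | v c = true} = 1) : ∃ b, v = fun c => decide (c = b) := by
  obtain ⟨b, hb⟩ := card_eq_one.1 hcard
  exact ⟨b, funext fun c => by
    rw [Bool.eq_iff_iff, decide_eq_true_iff]; simpa using congrArg (c ∈ ·) hb⟩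

end RowCounts

lemma Fin.card_filter_succAbove {m : ℕ} (i : Fin (m + 1)) (v : Fin (m + 1) → Bool) :
    #{c | v c = true} = #{c | v (i.succAbove c) = true} + if v i = true then 1 else 0 := by
  simp only [card_filter, Fin.sum_univ_succAbove _ i, add_comm]

lemma Fin.card_filter_castSucc {m : ℕ} (v : Fin (m + 1) → Bool) :
    #{c | v c = true} =
      #{c : Fin m | v c.castSucc = true} + if v (Fin.last m) = true then 1 else 0 := by
  simpa using Fin.card_filter_succAbove (Fin.last m) v

section DoubleCounting

variable {n k : ℕ}

def lamEntry (n k : ℕ) (i j : Fin n) : ℕ := #{A | isLambda n k A ∧ A i j = true}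

lemma isLambda_reindex (σ τ : Equiv.Perm (Fin n)) {A : Fin n → Fin n → Bool}
    (h : isLambda n k A) : isLambda n k (fun i j => A (σ i) (τ j)) :=
  ⟨fun i => (card_equiv τ (by simp)).trans (h.1 (σ i)),
    fun j => (card_equiv σ (by simp)).trans (h.2 (τ j))⟩

lemma lamEntry_eq (i j i' j' : Fin n) : lamEntry n k i j = lamEntry n k i' j' := by
  let swapIdx : (Fin n → Fin n → Bool) → Fin n → Fin n → Bool :=
    fun A r c => A (Equiv.swap i i' r) (Equiv.swap j j' c)
  have swapIdx_swapIdx (A) : swapIdx (swapIdx A) = A := by simp [swapIdx]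
  refine card_nbij' swapIdx swapIdx ?_ ?_ (fun A _ => swapIdx_swapIdx A)
    (fun A _ => swapIdx_swapIdx A)
  all_goals
    intro A hA
    simp only [coe_filter, Set.mem_ofPred_eq, mem_univ, true_and] at hA ⊢
    exact ⟨isLambda_reindex _ _ hA.1, by simpa [swapIdx] using hA.2⟩

lemma card_entries_of_isLambda {A : Fin n → Fin n → Bool} (h : isLambda n k A) :
    #{p : Fin n × Fin n | A p.1 p.2 = true} = n * k := by
  simp [card_filter_prod_eq_sum, h.1]

lemma sum_lamEntry : ∑ p : Fin n × Fin n, lamEntry n k p.1 p.2 = lam n k * (n * k) := by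
  have := sum_card_bipartiteAbove_eq_sum_card_bipartiteBelow (s := {A | isLambda n k A})
    (t := univ) (r := fun A (p : Fin n × Fin n) => A p.1 p.2 = true)
  simp only [bipartiteAbove, bipartiteBelow, filter_filter] at this
  simp only [lamEntry]
  rw [← this, sum_congr rfl fun A hA => card_entries_of_isLambda (mem_filter.1 hA).2,
    sum_const, smul_eq_mul, lam_eq_card]

lemma mul_lamPos (n k : ℕ) (h : 0 < n) : n * lamPos n k h = k * lam n k := by
  have hpos : lamPos n k h = lamEntry n k (lastIdx n h) (lastIdx n h) := by
    rw [lamPos, Nat.card_eq_fintype_card, Fintype.card_subtype, lamEntry]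
  have := sum_lamEntry (n := n) (k := k)
  rw [sum_congr rfl fun p _ => lamEntry_eq p.1 p.2 (lastIdx n h) (lastIdx n h), sum_const,
    card_univ, Fintype.card_prod, Fintype.card_fin, smul_eq_mul, ← hpos] at this
  exact Nat.eq_of_mul_eq_mul_left h (by linarith)

end DoubleCounting

section Border

variable {m : ℕ}

def IsDeficient (i j : Fin m) (M : Fin m → Fin m → Bool) : Prop :=
  HasRowCounts M (fun r => if r = i then 1 else 2) ∧
    HasRowCounts (swap M) (fun c => if c = j then 1 else 2)

instance (i j : Fin m) : DecidablePred (IsDeficient i j) := fun _ => by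
  unfold IsDeficient HasRowCounts; infer_instance

def border (M : Fin m → Fin m → Bool) (i j : Fin m) : Fin (m + 1) → Fin (m + 1) → Bool :=
  Fin.snoc (fun r => Fin.snoc (M r) (decide (r = i))) (Fin.snoc (fun c => decide (c = j)) true)

variable (M : Fin m → Fin m → Bool) (i j : Fin m)

@[simp] lemma border_castSucc_castSucc (r c : Fin m) :
    border M i j r.castSucc c.castSucc = M r c := by
  simp [border]

@[simp] lemma border_castSucc_last (r : Fin m) :
    border M i j r.castSucc (Fin.last m) = decide (r = i) := by
  simp [border]

@[simp] lemma border_last_castSucc (c : Fin m) :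
    border M i j (Fin.last m) c.castSucc = decide (c = j) := by
  simp [border]

@[simp] lemma border_last_last : border M i j (Fin.last m) (Fin.last m) = true := by
  simp [border]

lemma swap_border : swap (border M i j) = border (swap M) j i := by
  funext c r
  induction c using Fin.lastCases <;> induction r using Fin.lastCases <;> simp

lemma hasRowCounts_border_iff : HasRowCounts (border M i j) (fun _ => 2) ↔
    HasRowCounts M (fun r => if r = i then 1 else 2) := by
  simp only [HasRowCounts, Fin.forall_fin_succ', Fin.card_filter_castSucc (border M i j _),
    border_castSucc_castSucc, border_castSucc_last, border_last_castSucc, border_last_last,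
    decide_eq_true_eq, filter_eq', mem_univ, if_true, card_singleton, and_true]
  exact forall_congr' fun r => by split_ifs <;> omega

lemma isLambda_border_iff : isLambda (m + 1) 2 (border M i j) ↔ IsDeficient i j M := by
  rw [isLambda_iff_hasRowCounts, swap_border, hasRowCounts_border_iff, hasRowCounts_border_iff]
  rfl

variable {M i j} in
lemma border_injective {M' : Fin m → Fin m → Bool} {i' j' : Fin m}
    (h : border M i j = border M' i' j') : M = M' ∧ i = i' ∧ j = j' :=
  ⟨funext₂ fun r c => by simpa using congrFun₂ h r.castSucc c.castSucc,
    by simpa using congrFun₂ h i.castSucc (Fin.last m),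
    by simpa using congrFun₂ h (Fin.last m) j.castSucc⟩

lemma exists_eq_border {A : Fin (m + 1) → Fin (m + 1) → Bool} (hA : isLambda (m + 1) 2 A)
    (hlast : A (Fin.last m) (Fin.last m) = true) : ∃ M i j, A = border M i j := by
  have hrow := hA.1 (Fin.last m)
  have hcol := hA.2 (Fin.last m)
  rw [Fin.card_filter_castSucc] at hrow hcol
  simp only [hlast, if_true] at hrow hcol
  obtain ⟨j, hj⟩ := exists_eq_decide_of_card_filter_eq_one
    (v := fun c : Fin m => A (Fin.last m) c.castSucc) (by omega)
  obtain ⟨i, hi⟩ := exists_eq_decide_of_card_filter_eq_one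
    (v := fun r : Fin m => A r.castSucc (Fin.last m)) (by omega)
  refine ⟨fun r c => A r.castSucc c.castSucc, i, j, funext₂ fun r c => ?_⟩
  induction r using Fin.lastCases <;> induction c using Fin.lastCases <;>
    simp [hlast, congrFun hi _, congrFun hj _]

end Border

lemma lastIdx_succ (m : ℕ) : lastIdx (m + 1) m.succ_pos = Fin.last m := rfl

lemma lamPos_succ_eq_sum (m : ℕ) :
    lamPos (m + 1) 2 m.succ_pos = ∑ p : Fin m × Fin m, #{M | IsDeficient p.1 p.2 M} := by
  rw [lamPos, Nat.card_eq_fintype_card, Fintype.card_subtype, lastIdx_succ, ← card_sigma]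
  symm
  refine card_bij (fun a _ => border a.2 a.1.1 a.1.2) ?_ ?_ ?_
  · rintro ⟨⟨i, j⟩, M⟩ hM
    simp only [mem_sigma, mem_filter, mem_univ, true_and] at hM ⊢
    exact ⟨(isLambda_border_iff M i j).2 hM, border_last_last M i j⟩
  · rintro ⟨⟨i, j⟩, M⟩ _ ⟨⟨i', j'⟩, M'⟩ _ h
    obtain ⟨rfl, rfl, rfl⟩ := border_injective h
    rfl
  · intro A hA
    simp only [mem_filter, mem_univ, true_and] at hA
    obtain ⟨M, i, j, rfl⟩ := exists_eq_border hA.1 hA.2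
    exact ⟨⟨(i, j), M⟩, by simpa [isLambda_border_iff] using hA.1, rfl⟩

section Toggle

variable {α β : Type*} [DecidableEq α] [DecidableEq β]

def toggle (i : α) (j : β) (M : α → β → Bool) : α → β → Bool :=
  fun r c => xor (M r c) (decide (r = i ∧ c = j))

variable (i : α) (j : β) (M : α → β → Bool)

@[simp] lemma toggle_toggle : toggle i j (toggle i j M) = M := by
  funext r c
  simp [toggle]

@[simp] lemma toggle_apply_self : toggle i j M i j = !M i j := by
  simp [toggle]

lemma swap_toggle : swap (toggle i j M) = toggle j i (swap M) := by
  funext c r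
  simp [toggle, and_comm]

lemma card_toggle_row [Fintype β] (h : M i j = false) (r : α) :
    #{c | toggle i j M r c = true} = #{c | M r c = true} + if r = i then 1 else 0 := by
  split_ifs with hr
  · subst hr
    rw [← card_insert_of_notMem (s := {c | M r c = true}) (a := j) (by simp [h])]
    congr 1
    ext c
    by_cases hc : c = j <;> simp [toggle, hc, h]
  · simp [toggle, hr]

lemma hasRowCounts_toggle_iff [Fintype β] (h : M i j = false) :
    HasRowCounts (toggle i j M) (fun _ => 2) ↔
      HasRowCounts M (fun r => if r = i then 1 else 2) :=
  forall_congr' fun r => by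
    dsimp only
    rw [card_toggle_row i j M h]
    split_ifs <;> omega

end Toggle

section Deficient

variable {m : ℕ}

lemma isLambda_toggle_iff {i j : Fin m} {M : Fin m → Fin m → Bool} (h : M i j = false) :
    isLambda m 2 (toggle i j M) ↔ IsDeficient i j M := by
  rw [isLambda_iff_hasRowCounts, swap_toggle, hasRowCounts_toggle_iff i j M h,
    hasRowCounts_toggle_iff j i (swap M) h]
  rfl

lemma card_isDeficient_entry_false (i j : Fin m) :
    #{M | IsDeficient i j M ∧ M i j = false} = lamEntry m 2 i j := by
  refine card_nbij' (toggle i j) (toggle i j) ?_ ?_ (fun M _ => toggle_toggle i j M)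
    (fun M _ => toggle_toggle i j M)
  · intro M hM
    simp only [coe_filter, Set.mem_ofPred_eq, mem_univ, true_and] at hM ⊢
    exact ⟨(isLambda_toggle_iff hM.2).2 hM.1, by simp [hM.2]⟩
  · intro B hB
    simp only [coe_filter, Set.mem_ofPred_eq, mem_univ, true_and] at hB ⊢
    have h : toggle i j B i j = false := by simp [hB.2]
    exact ⟨(isLambda_toggle_iff h).1 (by rw [toggle_toggle]; exact hB.1), h⟩

def insertRowCol (i j : Fin (m + 1)) (C : Fin m → Fin m → Bool) :
    Fin (m + 1) → Fin (m + 1) → Bool :=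
  Fin.insertNth i (fun c => decide (c = j)) (fun r => Fin.insertNth j false (C r))

variable (i j : Fin (m + 1)) (C : Fin m → Fin m → Bool)

@[simp] lemma insertRowCol_apply_same (c : Fin (m + 1)) :
    insertRowCol i j C i c = decide (c = j) := by
  simp [insertRowCol]

@[simp] lemma insertRowCol_succAbove_apply_same (r : Fin m) :
    insertRowCol i j C (i.succAbove r) j = false := by
  simp [insertRowCol]

@[simp] lemma insertRowCol_succAbove_succAbove (r c : Fin m) :
    insertRowCol i j C (i.succAbove r) (j.succAbove c) = C r c := by
  simp [insertRowCol]

lemma swap_insertRowCol : swap (insertRowCol i j C) = insertRowCol j i (swap C) := by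
  funext c r
  induction c using j.succAboveCases <;> induction r using i.succAboveCases <;>
    simp [Fin.succAbove_ne]

lemma hasRowCounts_insertRowCol_iff :
    HasRowCounts (insertRowCol i j C) (fun r => if r = i then 1 else 2) ↔
      HasRowCounts C (fun _ => 2) := by
  simp only [HasRowCounts, Fin.forall_iff_succAbove i, Fin.card_filter_succAbove j
    (insertRowCol i j C _), insertRowCol_apply_same, insertRowCol_succAbove_apply_same,
    insertRowCol_succAbove_succAbove, Fin.succAbove_ne]
  simp

lemma isDeficient_insertRowCol_iff : IsDeficient i j (insertRowCol i j C) ↔ isLambda m 2 C := by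
  rw [IsDeficient, swap_insertRowCol, hasRowCounts_insertRowCol_iff,
    hasRowCounts_insertRowCol_iff]
  rfl

variable {i j} in
lemma eq_insertRowCol {M : Fin (m + 1) → Fin (m + 1) → Bool} (hM : IsDeficient i j M)
    (hij : M i j = true) :
    M = insertRowCol i j (fun r c => M (i.succAbove r) (j.succAbove c)) := by
  obtain ⟨b, hrow⟩ := exists_eq_decide_of_card_filter_eq_one (by simpa using hM.1 i)
  obtain ⟨a, hcol⟩ := exists_eq_decide_of_card_filter_eq_one (by simpa using hM.2 j)
  obtain rfl : j = b := by simpa [hij] using congrFun hrow j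
  obtain rfl : i = a := by simpa [hij] using congrFun hcol i
  funext r c
  induction r using i.succAboveCases <;> induction c using j.succAboveCases <;>
    simp [congrFun hrow _, congrFun hcol _, Fin.succAbove_ne]

lemma card_isDeficient_entry_true : #{M | IsDeficient i j M ∧ M i j = true} = lam m 2 := by
  rw [lam_eq_card]
  refine card_nbij' (fun M r c => M (i.succAbove r) (j.succAbove c)) (insertRowCol i j) ?_ ?_
    (fun M hM => ?_) (fun C _ => ?_)
  · intro M hM
    simp only [coe_filter, Set.mem_ofPred_eq, mem_univ, true_and] at hM ⊢
    rw [← isDeficient_insertRowCol_iff i j, ← eq_insertRowCol hM.1 hM.2]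
    exact hM.1
  · intro C hC
    simp only [coe_filter, Set.mem_ofPred_eq, mem_univ, true_and] at hC ⊢
    exact ⟨(isDeficient_insertRowCol_iff i j C).2 hC, by simp⟩
  · simp only [coe_filter, Set.mem_ofPred_eq, mem_univ, true_and] at hM
    exact (eq_insertRowCol hM.1 hM.2).symm
  · funext r c
    simp

lemma card_isDeficient : #{M | IsDeficient i j M} = lamEntry (m + 1) 2 i j + lam m 2 := by
  have := card_filter_add_card_filter_not (s := {M | IsDeficient i j M})
    (fun M : Fin (m + 1) → Fin (m + 1) → Bool => M i j = true)
  simp only [filter_filter, Bool.not_eq_true] at this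
  rw [← this, card_isDeficient_entry_true, card_isDeficient_entry_false, add_comm]

end Deficient

lemma lamPos_two_eq (m : ℕ) :
    lamPos (m + 2) 2 (m + 1).succ_pos = 2 * (m + 1) * lam (m + 1) 2 + (m + 1) ^ 2 * lam m 2 := by
  rw [lamPos_succ_eq_sum, sum_congr rfl fun p _ => card_isDeficient p.1 p.2, sum_add_distrib,
    sum_lamEntry, sum_const, card_univ, Fintype.card_prod, Fintype.card_fin, smul_eq_mul]
  ring

/-- Good–Crook recursion: 2λ_{n,2} = 2(n−1)n·λ_{n−1,2} + (n−1)²n·λ_{n−2,2}, with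
λ_{1,2} = 0 and λ_{2,2} = 1. -/
theorem lam_two_rec (n : ℕ) (hn : 3 ≤ n) :
    2 * lam n 2 = 2 * (n - 1) * n * lam (n - 1) 2 + (n - 1) ^ 2 * n * lam (n - 2) 2 ∧
    lam 1 2 = 0 ∧ lam 2 2 = 1 := by
  refine ⟨?_, by rw [lam_eq_card]; decide, by rw [lam_eq_card]; decide⟩
  obtain ⟨m, rfl⟩ : ∃ m, n = m + 2 := ⟨n - 2, by omega⟩
  rw [← mul_lamPos (m + 2) 2 (m + 1).succ_pos, lamPos_two_eq, show m + 2 - 1 = m + 1 from rfl,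
    Nat.add_sub_cancel]
  ring
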